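/- arXiv:2406.02317 — 3 statements merged into one kernel-verified Lean document; each statement's English description precedes it below -/
import Mathlib

section
/- For two probability measures μ and ν on ℝ with finite second moments and cumulative distribution functions F_μ and F_ν, the squared 2-Wasserstein distance between μ and ν equals the integral over t ∈ (0,1) of |F_μ⁻¹(t) − F_ν⁻¹(t)|², where F⁻¹ denotes the generalized inverse (quantile function). -/
set_option linter.unusedSectionVars false
open MeasureTheory Set

/-- The cumulative distribution function of a measure on `ℝ`. -/
noncomputable def mcdf (μ : Measure ℝ) (y : ℝ) : ℝ := (μ (Set.Iic y)).toReal

/-- The quantile function (generalized inverse CDF) of a measure on `ℝ`. -/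
noncomputable def quantile (μ : Measure ℝ) (t : ℝ) : ℝ := sInf {y | t ≤ mcdf μ y}

/-- `π` is a coupling of `μ` and `ν`. -/
def IsCoupling (π : Measure (ℝ × ℝ)) (μ ν : Measure ℝ) : Prop :=
  π.map Prod.fst = μ ∧ π.map Prod.snd = ν

/-- The squared 2-Wasserstein distance between measures on `ℝ`. -/
noncomputable def W2sq (μ ν : Measure ℝ) : ℝ :=
  sInf {r | ∃ π : Measure (ℝ × ℝ), IsCoupling π μ ν ∧ r = ∫ p, (p.1 - p.2) ^ 2 ∂π}

open ProbabilityTheory Filter Topology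

namespace W2aux

variable (μ : Measure ℝ) [IsProbabilityMeasure μ]

lemma mcdf_eq (y : ℝ) : mcdf μ y = cdf μ y := (cdf_eq_real μ y).symm

lemma mcdf_nonneg (y : ℝ) : 0 ≤ mcdf μ y := ENNReal.toReal_nonneg

lemma mcdf_le_one (y : ℝ) : mcdf μ y ≤ 1 := by
  rw [mcdf_eq]; exact cdf_le_one μ y

lemma mcdf_mono : Monotone (mcdf μ) := by
  intro a b h; rw [mcdf_eq, mcdf_eq]; exact monotone_cdf μ h

variable {t : ℝ}

lemma quantile_set_nonempty (ht1 : t < 1) : {y | t ≤ mcdf μ y}.Nonempty := by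
  obtain ⟨y, hy⟩ := ((tendsto_cdf_atTop μ).eventually (eventually_ge_nhds ht1)).exists
  exact ⟨y, by rw [mem_setOf_eq, mcdf_eq]; exact hy⟩

lemma quantile_set_bddBelow (ht0 : 0 < t) : BddBelow {y | t ≤ mcdf μ y} := by
  obtain ⟨y₀, hy₀⟩ := eventually_atBot.1
    ((tendsto_cdf_atBot μ).eventually (eventually_lt_nhds ht0))
  refine ⟨y₀, fun z hz => ?_⟩
  by_contra h
  push_neg at h
  have := hy₀ z h.le
  rw [mem_setOf_eq, mcdf_eq] at hz
  linarith

lemma le_mcdf_quantile (ht0 : 0 < t) (ht1 : t < 1) : t ≤ mcdf μ (quantile μ t) := by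
  set S := {y | t ≤ mcdf μ y} with hS
  have hne := quantile_set_nonempty μ ht1
  have hbd := quantile_set_bddBelow μ ht0
  have hev : ∀ᶠ y in 𝓝[>] (sInf S), t ≤ cdf μ y := by
    filter_upwards [self_mem_nhdsWithin] with y hy
    obtain ⟨s, hs, hs'⟩ := (csInf_lt_iff hbd hne).1 hy
    have : t ≤ mcdf μ s := hs
    rw [mcdf_eq] at this
    exact this.trans (monotone_cdf μ hs'.le)
  have htd : Tendsto (cdf μ) (𝓝[>] (sInf S)) (𝓝 (cdf μ (sInf S))) :=
    ((cdf μ).right_continuous (sInf S)).mono_left (nhdsWithin_mono _ Ioi_subset_Ici_self)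
  have := ge_of_tendsto htd hev
  rw [mcdf_eq]
  exact this

lemma quantile_le_iff (ht0 : 0 < t) (ht1 : t < 1) (x : ℝ) :
    quantile μ t ≤ x ↔ t ≤ mcdf μ x := by
  constructor
  · intro h
    exact (le_mcdf_quantile μ ht0 ht1).trans (mcdf_mono μ h)
  · intro h
    exact csInf_le (quantile_set_bddBelow μ ht0) h

lemma lt_quantile_iff (ht0 : 0 < t) (ht1 : t < 1) (x : ℝ) :
    x < quantile μ t ↔ mcdf μ x < t := by
  rw [← not_le, ← not_le, quantile_le_iff μ ht0 ht1]

lemma quantile_nonpos (ht : t ≤ 0) : quantile μ t = 0 := by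
  have : {y | t ≤ mcdf μ y} = univ := eq_univ_of_forall fun y => ht.trans (mcdf_nonneg μ y)
  rw [quantile, this]
  exact Real.sInf_of_not_bddBelow not_bddBelow_univ

lemma quantile_gt_one (ht : 1 < t) : quantile μ t = 0 := by
  have : {y | t ≤ mcdf μ y} = ∅ := by
    ext y; simp only [mem_setOf_eq, mem_empty_iff_false, iff_false, not_le]
    exact (mcdf_le_one μ y).trans_lt ht
  rw [quantile, this]
  exact Real.sInf_empty

lemma measurable_quantile : Measurable (quantile μ) := by
  classical
  apply measurable_of_Iic
  intro x
  have : quantile μ ⁻¹' Iic x =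
      (Ioo 0 1 ∩ Iic (mcdf μ x)) ∪ ((Iic 0 ∪ Ioi 1) ∩ {t : ℝ | (0:ℝ) ≤ x})
        ∪ ({1} ∩ {t : ℝ | quantile μ 1 ≤ x}) := by
    ext t
    simp only [mem_preimage, mem_Iic, mem_union, mem_inter_iff, mem_Ioo, mem_setOf_eq,
      mem_singleton_iff, mem_Ioi]
    constructor
    · intro h
      rcases le_or_gt t 0 with h0 | h0
      · exact Or.inl (Or.inr ⟨Or.inl h0, by rwa [quantile_nonpos μ h0] at h⟩)
      rcases lt_trichotomy t 1 with h1 | h1 | h1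
      · exact Or.inl (Or.inl ⟨⟨h0, h1⟩, (quantile_le_iff μ h0 h1 x).1 h⟩)
      · exact Or.inr ⟨h1, by rwa [h1] at h⟩
      · exact Or.inl (Or.inr ⟨Or.inr h1, by rwa [quantile_gt_one μ h1] at h⟩)
    · rintro ((⟨⟨h0, h1⟩, h⟩ | ⟨h01, h⟩) | ⟨h1, h⟩)
      · exact (quantile_le_iff μ h0 h1 x).2 h
      · rcases h01 with h0 | h1
        · rwa [quantile_nonpos μ h0]
        · rwa [quantile_gt_one μ h1]
      · rwa [h1]
  rw [this]
  exact ((measurableSet_Ioo.inter measurableSet_Iic).union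
    ((measurableSet_Iic.union measurableSet_Ioi).inter (MeasurableSet.const _))).union
    ((measurableSet_singleton 1).inter (MeasurableSet.const _))


/-! ### Volume computations on `(0,1)` -/

lemma vol_master {a b : ℝ} (ha : 0 ≤ a) (hb : b ≤ 1) :
    volume (Ioo (0:ℝ) 1 ∩ Ioi a ∩ Iic b) = ENNReal.ofReal (b - a) := by
  rcases le_or_gt b a with h | h
  · have he : Ioo (0:ℝ) 1 ∩ Ioi a ∩ Iic b = ∅ := by
      ext t
      simp only [mem_inter_iff, mem_Ioo, mem_Ioi, mem_Iic, mem_empty_iff_false, iff_false,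
        not_and]
      rintro ⟨⟨-, -⟩, hta⟩ htb
      exact absurd htb (not_le.2 (lt_of_le_of_lt h hta))
    rw [he, measure_empty]
    exact (ENNReal.ofReal_eq_zero.2 (by linarith)).symm
  · rcases lt_or_eq_of_le hb with hb1 | hb1
    · have he : Ioo (0:ℝ) 1 ∩ Ioi a ∩ Iic b = Ioc a b := by
        ext t
        simp only [mem_inter_iff, mem_Ioo, mem_Ioi, mem_Iic, mem_Ioc]
        constructor
        · rintro ⟨⟨-, h1⟩, h2⟩; exact ⟨h1, h2⟩
        · rintro ⟨h1, h2⟩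
          exact ⟨⟨⟨lt_of_le_of_lt ha h1, lt_of_le_of_lt h2 hb1⟩, h1⟩, h2⟩
      rw [he, Real.volume_Ioc]
    · subst hb1
      have he : Ioo (0:ℝ) 1 ∩ Ioi a ∩ Iic 1 = Ioo a 1 := by
        ext t
        simp only [mem_inter_iff, mem_Ioo, mem_Ioi, mem_Iic]
        constructor
        · rintro ⟨⟨⟨-, h2⟩, h1⟩, -⟩; exact ⟨h1, h2⟩
        · rintro ⟨h1, h2⟩
          exact ⟨⟨⟨lt_of_le_of_lt ha h1, h2⟩, h1⟩, h2.le⟩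
      rw [he, Real.volume_Ioo]

lemma vol_Iic {b : ℝ} (hb0 : 0 ≤ b) (hb : b ≤ 1) :
    volume (Ioo (0:ℝ) 1 ∩ Iic b) = ENNReal.ofReal b := by
  have : Ioo (0:ℝ) 1 ∩ Iic b = Ioo (0:ℝ) 1 ∩ Ioi 0 ∩ Iic b := by
    rw [inter_eq_left.2 Ioo_subset_Ioi_self]
  rw [this, vol_master le_rfl hb, sub_zero]

lemma vol_Ioi {a : ℝ} (ha0 : 0 ≤ a) (ha : a ≤ 1) :
    volume (Ioo (0:ℝ) 1 ∩ Ioi a) = ENNReal.ofReal (1 - a) := by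
  have : Ioo (0:ℝ) 1 ∩ Ioi a = Ioo (0:ℝ) 1 ∩ Ioi a ∩ Iic 1 := by
    refine (inter_eq_left.2 ?_).symm
    rintro t ⟨⟨-, h⟩, -⟩
    exact h.le
  rw [this, vol_master ha0 le_rfl]

/-! ### The pushforward of `volume.restrict (Ioo 0 1)` under `quantile μ` -/

lemma preimage_Iic (x : ℝ) :
    quantile μ ⁻¹' Iic x ∩ Ioo 0 1 = Ioo (0:ℝ) 1 ∩ Iic (mcdf μ x) := by
  ext t
  simp only [mem_inter_iff, mem_preimage, mem_Iic, mem_Ioo]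
  constructor
  · rintro ⟨h, ht⟩; exact ⟨ht, (quantile_le_iff μ ht.1 ht.2 x).1 h⟩
  · rintro ⟨ht, h⟩; exact ⟨(quantile_le_iff μ ht.1 ht.2 x).2 h, ht⟩

lemma preimage_Ioi (x : ℝ) :
    quantile μ ⁻¹' Ioi x ∩ Ioo 0 1 = Ioo (0:ℝ) 1 ∩ Ioi (mcdf μ x) := by
  ext t
  simp only [mem_inter_iff, mem_preimage, mem_Ioi, mem_Ioo]
  constructor
  · rintro ⟨h, ht⟩
    exact ⟨ht, not_le.1 fun hle => absurd ((quantile_le_iff μ ht.1 ht.2 x).2 hle) (not_le.2 h)⟩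
  · rintro ⟨ht, h⟩
    refine ⟨not_le.1 fun hle => ?_, ht⟩
    exact absurd ((quantile_le_iff μ ht.1 ht.2 x).1 hle) (not_le.2 h)

instance : IsProbabilityMeasure (volume.restrict (Ioo (0:ℝ) 1)) :=
  ⟨by rw [Measure.restrict_apply_univ, Real.volume_Ioo]; norm_num⟩

lemma map_quantile : Measure.map (quantile μ) (volume.restrict (Ioo 0 1)) = μ := by
  have hq := measurable_quantile μ
  have : IsProbabilityMeasure (Measure.map (quantile μ) (volume.restrict (Ioo (0:ℝ) 1))) :=
    Measure.isProbabilityMeasure_map hq.aemeasurable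
  refine Measure.ext_of_Iic _ μ fun x => ?_
  rw [Measure.map_apply hq measurableSet_Iic, Measure.restrict_apply (hq measurableSet_Iic),
    preimage_Iic, vol_Iic (mcdf_nonneg μ x) (mcdf_le_one μ x), mcdf_eq, ofReal_cdf]


/-! ### The layered representation of multiplication -/

/-- `e s x = 1_{x > s} - 1_{x ≤ -s}`; for `s > 0`, `∫ s in Ioi 0, e s x ds = x`. -/
noncomputable def e (s x : ℝ) : ℝ :=
  Set.indicator (Ioi s) 1 x - Set.indicator (Iic (-s)) 1 x

lemma measurable_e : Measurable (fun p : ℝ × ℝ => e p.1 p.2) := by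
  have h1 : (fun p : ℝ × ℝ => Set.indicator (Ioi p.1) (1 : ℝ → ℝ) p.2) =
      Set.indicator {p : ℝ × ℝ | p.1 < p.2} 1 := by
    ext p
    by_cases h : p.1 < p.2 <;> simp [Set.indicator_apply, h]
  have h2 : (fun p : ℝ × ℝ => Set.indicator (Iic (-p.1)) (1 : ℝ → ℝ) p.2) =
      Set.indicator {p : ℝ × ℝ | p.2 ≤ -p.1} 1 := by
    ext p
    by_cases h : p.2 ≤ -p.1 <;> simp [Set.indicator_apply, h]
  have : (fun p : ℝ × ℝ => e p.1 p.2) =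
      (fun p : ℝ × ℝ => Set.indicator {p : ℝ × ℝ | p.1 < p.2} 1 p
        - Set.indicator {p : ℝ × ℝ | p.2 ≤ -p.1} 1 p) := by
    funext p
    rw [e, ← h1, ← h2]
  rw [this]
  exact ((measurable_const.indicator (measurableSet_lt measurable_fst measurable_snd)).sub
    (measurable_const.indicator (measurableSet_le measurable_snd measurable_fst.neg)))

lemma e_as_fun_s (x : ℝ) : (fun s => e s x) =
    fun s => Set.indicator (Iio x) (1 : ℝ → ℝ) s - Set.indicator (Iic (-x)) (1 : ℝ → ℝ) s := by
  funext s
  rw [e]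
  have g1 : Set.indicator (Ioi s) (1:ℝ→ℝ) x = Set.indicator (Iio x) (1:ℝ→ℝ) s := by
    by_cases h : s < x <;> simp [Set.indicator_apply, h]
  have g2 : Set.indicator (Iic (-s)) (1:ℝ→ℝ) x = Set.indicator (Iic (-x)) (1:ℝ→ℝ) s := by
    have h' : s ≤ -x ↔ x ≤ -s := ⟨fun h => by linarith, fun h => by linarith⟩
    by_cases h : x ≤ -s <;> simp [Set.indicator_apply, h, h']
  rw [g1, g2]

lemma integrable_ind_Iio (x : ℝ) :
    Integrable (Set.indicator (Iio x) (1 : ℝ → ℝ)) (volume.restrict (Ioi 0)) := by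
  rw [integrable_indicator_iff measurableSet_Iio]
  refine integrableOn_const (ne_of_lt ?_)
  rw [Measure.restrict_apply measurableSet_Iio]
  have : Iio x ∩ Ioi 0 = Ioo 0 x := by
    ext t; simp only [mem_inter_iff, mem_Iio, mem_Ioi, mem_Ioo]; tauto
  rw [this, Real.volume_Ioo]
  exact ENNReal.ofReal_lt_top

lemma integrable_ind_Iic (x : ℝ) :
    Integrable (Set.indicator (Iic x) (1 : ℝ → ℝ)) (volume.restrict (Ioi 0)) := by
  rw [integrable_indicator_iff measurableSet_Iic]
  refine integrableOn_const (ne_of_lt ?_)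
  rw [Measure.restrict_apply measurableSet_Iic]
  have : Iic x ∩ Ioi 0 = Ioc 0 x := by
    ext t; simp only [mem_inter_iff, mem_Iic, mem_Ioi, mem_Ioc]; tauto
  rw [this, Real.volume_Ioc]
  exact ENNReal.ofReal_lt_top

lemma integrable_e (x : ℝ) : Integrable (fun s => e s x) (volume.restrict (Ioi 0)) := by
  rw [e_as_fun_s]
  exact (integrable_ind_Iio x).sub (integrable_ind_Iic (-x))

lemma int_ind_Iio (x : ℝ) :
    ∫ s in Ioi (0:ℝ), Set.indicator (Iio x) (1 : ℝ → ℝ) s = max x 0 := by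
  rw [integral_indicator measurableSet_Iio]
  simp only [Pi.one_apply]
  rw [setIntegral_const, measureReal_def, Measure.restrict_apply measurableSet_Iio]
  have : Iio x ∩ Ioi 0 = Ioo 0 x := by
    ext t; simp only [mem_inter_iff, mem_Iio, mem_Ioi, mem_Ioo]; tauto
  rw [this, Real.volume_Ioo, smul_eq_mul, mul_one, ENNReal.toReal_ofReal', sub_zero]

lemma int_ind_Iic (x : ℝ) :
    ∫ s in Ioi (0:ℝ), Set.indicator (Iic x) (1 : ℝ → ℝ) s = max x 0 := by
  rw [integral_indicator measurableSet_Iic]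
  simp only [Pi.one_apply]
  rw [setIntegral_const, measureReal_def, Measure.restrict_apply measurableSet_Iic]
  have : Iic x ∩ Ioi 0 = Ioc 0 x := by
    ext t; simp only [mem_inter_iff, mem_Iic, mem_Ioi, mem_Ioc]; tauto
  rw [this, Real.volume_Ioc, smul_eq_mul, mul_one, ENNReal.toReal_ofReal', sub_zero]

lemma integral_e (x : ℝ) : ∫ s in Ioi (0:ℝ), e s x = x := by
  rw [e_as_fun_s, integral_sub (integrable_ind_Iio x) (integrable_ind_Iic (-x)),
    int_ind_Iio, int_ind_Iic]
  rcases le_total 0 x with h | h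
  · rw [max_eq_left h, max_eq_right (neg_nonpos.2 h), sub_zero]
  · rw [max_eq_right h, max_eq_left (neg_nonneg.2 h), zero_sub, neg_neg]

lemma integral_abs_e (x : ℝ) : ∫ s in Ioi (0:ℝ), |e s x| = |x| := by
  have key : EqOn (fun s => |e s x|)
      (fun s => Set.indicator (Iio x) (1 : ℝ → ℝ) s + Set.indicator (Iic (-x)) (1 : ℝ → ℝ) s)
      (Ioi 0) := by
    intro s hs
    have hs0 : (0:ℝ) < s := hs
    have he : e s x = Set.indicator (Iio x) (1 : ℝ → ℝ) s - Set.indicator (Iic (-x)) 1 s :=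
      congrFun (e_as_fun_s x) s
    simp only
    rw [he]
    by_cases h1 : s < x <;> by_cases h2 : s ≤ -x <;>
      simp [Set.indicator_apply, h1, h2] <;> linarith
  rw [setIntegral_congr_fun measurableSet_Ioi key,
    integral_add (integrable_ind_Iio x) (integrable_ind_Iic (-x)), int_ind_Iio, int_ind_Iic]
  rcases le_total 0 x with h | h
  · rw [max_eq_left h, max_eq_right (neg_nonpos.2 h), add_zero, abs_of_nonneg h]
  · rw [max_eq_right h, max_eq_left (neg_nonneg.2 h), zero_add, abs_of_nonpos h]


/-! ### Couplings -/

variable {π : Measure (ℝ × ℝ)} {ν : Measure ℝ}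

lemma isProb_of_coupling {μ₁ ν₁ : Measure ℝ} [IsProbabilityMeasure μ₁]
    {π : Measure (ℝ × ℝ)} (hc : IsCoupling π μ₁ ν₁) : IsProbabilityMeasure π := by
  constructor
  have h : (π.map Prod.fst) univ = 1 := by rw [hc.1]; exact measure_univ
  rwa [Measure.map_apply measurable_fst MeasurableSet.univ, preimage_univ] at h

lemma coupling_fst {μ₁ ν₁ : Measure ℝ} {π : Measure (ℝ × ℝ)} (hc : IsCoupling π μ₁ ν₁)
    {A : Set ℝ} (hA : MeasurableSet A) :
    π (A ×ˢ univ) = μ₁ A := by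
  rw [← hc.1, Measure.map_apply measurable_fst hA]
  congr 1
  ext p
  simp [Set.mem_prod]

lemma coupling_snd {μ₁ ν₁ : Measure ℝ} {π : Measure (ℝ × ℝ)} (hc : IsCoupling π μ₁ ν₁)
    {B : Set ℝ} (hB : MeasurableSet B) :
    π (univ ×ˢ B) = ν₁ B := by
  rw [← hc.2, Measure.map_apply measurable_snd hB]
  congr 1
  ext p
  simp [Set.mem_prod]

lemma toReal_Ioi (x : ℝ) : (μ (Ioi x)).toReal = 1 - mcdf μ x := by
  have h : μ (Ioi x) = 1 - μ (Iic x) := by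
    rw [← compl_Iic, measure_compl measurableSet_Iic (measure_ne_top μ _), measure_univ]
  rw [h, ENNReal.toReal_sub_of_le prob_le_one ENNReal.one_ne_top, ENNReal.toReal_one, mcdf]

/-! ### Expansion of the inner integral -/

lemma J_expand (π : Measure (ℝ × ℝ)) [IsProbabilityMeasure π] (s u : ℝ) :
    ∫ p, e s p.1 * e u p.2 ∂π =
      (π (Ioi s ×ˢ Ioi u)).toReal - (π (Ioi s ×ˢ Iic (-u))).toReal
        - (π (Iic (-s) ×ˢ Ioi u)).toReal + (π (Iic (-s) ×ˢ Iic (-u))).toReal := by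
  have hind : ∀ (S : Set (ℝ × ℝ)), MeasurableSet S → Integrable (S.indicator (1 : ℝ × ℝ → ℝ)) π :=
    fun S hS => by
      rw [integrable_indicator_iff hS]
      exact integrableOn_const (measure_ne_top π S)
  have m1 : MeasurableSet (Ioi s ×ˢ Ioi u) := measurableSet_Ioi.prod measurableSet_Ioi
  have m2 : MeasurableSet (Ioi s ×ˢ Iic (-u)) := measurableSet_Ioi.prod measurableSet_Iic
  have m3 : MeasurableSet (Iic (-s) ×ˢ Ioi u) := measurableSet_Iic.prod measurableSet_Ioi
  have m4 : MeasurableSet (Iic (-s) ×ˢ Iic (-u)) := measurableSet_Iic.prod measurableSet_Iic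
  have hfun : (fun p : ℝ × ℝ => e s p.1 * e u p.2) = fun p =>
      (Ioi s ×ˢ Ioi u).indicator 1 p - (Ioi s ×ˢ Iic (-u)).indicator 1 p
        - (Iic (-s) ×ˢ Ioi u).indicator 1 p + (Iic (-s) ×ˢ Iic (-u)).indicator 1 p := by
    funext p
    simp only [e, Set.indicator_apply, Set.mem_prod, mem_Ioi, mem_Iic, Pi.one_apply]
    by_cases h1 : s < p.1 <;> by_cases h2 : p.1 ≤ -s <;>
      by_cases h3 : u < p.2 <;> by_cases h4 : p.2 ≤ -u <;>
      simp [h1, h2, h3, h4]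
  have i12 : Integrable (fun p : ℝ × ℝ => (Ioi s ×ˢ Ioi u).indicator (1 : ℝ × ℝ → ℝ) p
      - (Ioi s ×ˢ Iic (-u)).indicator (1 : ℝ × ℝ → ℝ) p) π := by
    exact (hind _ m1).sub (hind _ m2)
  have i123 : Integrable (fun p : ℝ × ℝ => (Ioi s ×ˢ Ioi u).indicator (1 : ℝ × ℝ → ℝ) p
      - (Ioi s ×ˢ Iic (-u)).indicator (1 : ℝ × ℝ → ℝ) p
      - (Iic (-s) ×ˢ Ioi u).indicator (1 : ℝ × ℝ → ℝ) p) π :=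
    by exact i12.sub (hind _ m3)
  rw [hfun, integral_add i123 (hind _ m4), integral_sub i12 (hind _ m3),
    integral_sub (hind _ m1) (hind _ m2),
    integral_indicator_one m1, integral_indicator_one m2, integral_indicator_one m3,
    integral_indicator_one m4]
  rfl

/-! ### The key pointwise comparison -/

lemma measurable_pairQ (μ₁ ν₁ : Measure ℝ) [IsProbabilityMeasure μ₁] [IsProbabilityMeasure ν₁] :
    Measurable (fun t => (quantile μ₁ t, quantile ν₁ t)) :=
  (measurable_quantile μ₁).prodMk (measurable_quantile ν₁)

lemma isCoupling_Q (μ₁ ν₁ : Measure ℝ) [IsProbabilityMeasure μ₁] [IsProbabilityMeasure ν₁] :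
    IsCoupling (Measure.map (fun t => (quantile μ₁ t, quantile ν₁ t))
      (volume.restrict (Ioo 0 1))) μ₁ ν₁ := by
  constructor
  · rw [Measure.map_map measurable_fst (measurable_pairQ μ₁ ν₁)]
    exact map_quantile μ₁
  · rw [Measure.map_map measurable_snd (measurable_pairQ μ₁ ν₁)]
    exact map_quantile ν₁

variable [IsProbabilityMeasure ν]

lemma J_le (hc : IsCoupling π μ ν) (s u : ℝ) :
    ∫ p, e s p.1 * e u p.2 ∂π ≤
      ∫ p, e s p.1 * e u p.2
        ∂(Measure.map (fun t => (quantile μ t, quantile ν t)) (volume.restrict (Ioo 0 1))) := by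
  haveI := isProb_of_coupling hc
  set πQ := Measure.map (fun t => (quantile μ t, quantile ν t))
    (volume.restrict (Ioo (0:ℝ) 1)) with hπQ
  have hφ : Measurable (fun t => (quantile μ t, quantile ν t)) := measurable_pairQ μ ν
  have hcQ : IsCoupling πQ μ ν := isCoupling_Q μ ν
  haveI := isProb_of_coupling hcQ
  have m1 : MeasurableSet (Ioi s ×ˢ Ioi u) := measurableSet_Ioi.prod measurableSet_Ioi
  have m2 : MeasurableSet (Ioi s ×ˢ Iic (-u)) := measurableSet_Ioi.prod measurableSet_Iic
  have m3 : MeasurableSet (Iic (-s) ×ˢ Ioi u) := measurableSet_Iic.prod measurableSet_Ioi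
  have m4 : MeasurableSet (Iic (-s) ×ˢ Iic (-u)) := measurableSet_Iic.prod measurableSet_Iic
  rw [J_expand π s u, J_expand πQ s u]
  set a := mcdf μ s with ha
  set b := mcdf ν u with hb
  set c := mcdf μ (-s) with hcc
  set d := mcdf ν (-u) with hd
  have ha0 : 0 ≤ a := mcdf_nonneg μ s
  have ha1 : a ≤ 1 := mcdf_le_one μ s
  have hb0 : 0 ≤ b := mcdf_nonneg ν u
  have hb1 : b ≤ 1 := mcdf_le_one ν u
  have hc0 : 0 ≤ c := mcdf_nonneg μ (-s)
  have hc1 : c ≤ 1 := mcdf_le_one μ (-s)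
  have hd0 : 0 ≤ d := mcdf_nonneg ν (-u)
  have hd1 : d ≤ 1 := mcdf_le_one ν (-u)
  -- exact values for the quantile coupling
  have hQ1 : πQ (Ioi s ×ˢ Ioi u) = ENNReal.ofReal (1 - max a b) := by
    rw [hπQ, Measure.map_apply hφ m1, Measure.restrict_apply (hφ m1)]
    have hs : (fun t => (quantile μ t, quantile ν t)) ⁻¹' (Ioi s ×ˢ Ioi u) ∩ Ioo 0 1
        = Ioo (0:ℝ) 1 ∩ Ioi (max a b) := by
      ext t
      simp only [mem_inter_iff, mem_preimage, Set.mem_prod, mem_Ioi, mem_Ioo, max_lt_iff]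
      constructor
      · rintro ⟨⟨h1, h2⟩, ht⟩
        exact ⟨ht, (lt_quantile_iff μ ht.1 ht.2 s).1 h1, (lt_quantile_iff ν ht.1 ht.2 u).1 h2⟩
      · rintro ⟨ht, h1, h2⟩
        exact ⟨⟨(lt_quantile_iff μ ht.1 ht.2 s).2 h1, (lt_quantile_iff ν ht.1 ht.2 u).2 h2⟩, ht⟩
    rw [hs, vol_Ioi (le_max_of_le_left ha0) (max_le ha1 hb1)]
  have hQ2 : πQ (Ioi s ×ˢ Iic (-u)) = ENNReal.ofReal (d - a) := by
    rw [hπQ, Measure.map_apply hφ m2, Measure.restrict_apply (hφ m2)]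
    have hs : (fun t => (quantile μ t, quantile ν t)) ⁻¹' (Ioi s ×ˢ Iic (-u)) ∩ Ioo 0 1
        = Ioo (0:ℝ) 1 ∩ Ioi a ∩ Iic d := by
      ext t
      simp only [mem_inter_iff, mem_preimage, Set.mem_prod, mem_Ioi, mem_Iic, mem_Ioo]
      constructor
      · rintro ⟨⟨h1, h2⟩, ht⟩
        exact ⟨⟨ht, (lt_quantile_iff μ ht.1 ht.2 s).1 h1⟩,
          (quantile_le_iff ν ht.1 ht.2 (-u)).1 h2⟩
      · rintro ⟨⟨ht, h1⟩, h2⟩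
        exact ⟨⟨(lt_quantile_iff μ ht.1 ht.2 s).2 h1, (quantile_le_iff ν ht.1 ht.2 (-u)).2 h2⟩, ht⟩
    rw [hs, vol_master ha0 hd1]
  have hQ3 : πQ (Iic (-s) ×ˢ Ioi u) = ENNReal.ofReal (c - b) := by
    rw [hπQ, Measure.map_apply hφ m3, Measure.restrict_apply (hφ m3)]
    have hs : (fun t => (quantile μ t, quantile ν t)) ⁻¹' (Iic (-s) ×ˢ Ioi u) ∩ Ioo 0 1
        = Ioo (0:ℝ) 1 ∩ Ioi b ∩ Iic c := by
      ext t
      simp only [mem_inter_iff, mem_preimage, Set.mem_prod, mem_Ioi, mem_Iic, mem_Ioo]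
      constructor
      · rintro ⟨⟨h1, h2⟩, ht⟩
        exact ⟨⟨ht, (lt_quantile_iff ν ht.1 ht.2 u).1 h2⟩,
          (quantile_le_iff μ ht.1 ht.2 (-s)).1 h1⟩
      · rintro ⟨⟨ht, h2⟩, h1⟩
        exact ⟨⟨(quantile_le_iff μ ht.1 ht.2 (-s)).2 h1, (lt_quantile_iff ν ht.1 ht.2 u).2 h2⟩, ht⟩
    rw [hs, vol_master hb0 hc1]
  have hQ4 : πQ (Iic (-s) ×ˢ Iic (-u)) = ENNReal.ofReal (min c d) := by
    rw [hπQ, Measure.map_apply hφ m4, Measure.restrict_apply (hφ m4)]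
    have hs : (fun t => (quantile μ t, quantile ν t)) ⁻¹' (Iic (-s) ×ˢ Iic (-u)) ∩ Ioo 0 1
        = Ioo (0:ℝ) 1 ∩ Iic (min c d) := by
      ext t
      simp only [mem_inter_iff, mem_preimage, Set.mem_prod, mem_Iic, mem_Ioo, le_min_iff]
      constructor
      · rintro ⟨⟨h1, h2⟩, ht⟩
        exact ⟨ht, (quantile_le_iff μ ht.1 ht.2 (-s)).1 h1,
          (quantile_le_iff ν ht.1 ht.2 (-u)).1 h2⟩
      · rintro ⟨ht, h1, h2⟩
        exact ⟨⟨(quantile_le_iff μ ht.1 ht.2 (-s)).2 h1,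
          (quantile_le_iff ν ht.1 ht.2 (-u)).2 h2⟩, ht⟩
    rw [hs, vol_Iic (le_min hc0 hd0) (min_le_of_left_le hc1)]
  -- bounds for the general coupling
  have k1a : (π (Ioi s ×ˢ Ioi u)).toReal ≤ 1 - a := by
    have h : π (Ioi s ×ˢ Ioi u) ≤ π (Ioi s ×ˢ univ) :=
      measure_mono (Set.prod_mono (subset_refl (Ioi s)) (subset_univ (Ioi u)))
    rw [coupling_fst hc measurableSet_Ioi] at h
    have := ENNReal.toReal_mono (measure_ne_top μ _) h
    rwa [toReal_Ioi μ s] at this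
  have k1b : (π (Ioi s ×ˢ Ioi u)).toReal ≤ 1 - b := by
    have h : π (Ioi s ×ˢ Ioi u) ≤ π (univ ×ˢ Ioi u) :=
      measure_mono (Set.prod_mono (subset_univ (Ioi s)) (subset_refl (Ioi u)))
    rw [coupling_snd hc measurableSet_Ioi] at h
    have := ENNReal.toReal_mono (measure_ne_top ν _) h
    rwa [toReal_Ioi ν u] at this
  have k4c : (π (Iic (-s) ×ˢ Iic (-u))).toReal ≤ c := by
    have h : π (Iic (-s) ×ˢ Iic (-u)) ≤ π (Iic (-s) ×ˢ univ) :=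
      measure_mono (Set.prod_mono (subset_refl (Iic (-s))) (subset_univ (Iic (-u))))
    rw [coupling_fst hc measurableSet_Iic] at h
    exact ENNReal.toReal_mono (measure_ne_top μ _) h
  have k4d : (π (Iic (-s) ×ˢ Iic (-u))).toReal ≤ d := by
    have h : π (Iic (-s) ×ˢ Iic (-u)) ≤ π (univ ×ˢ Iic (-u)) :=
      measure_mono (Set.prod_mono (subset_univ (Iic (-s))) (subset_refl (Iic (-u))))
    rw [coupling_snd hc measurableSet_Iic] at h
    exact ENNReal.toReal_mono (measure_ne_top ν _) h
  have k2 : d - a ≤ (π (Ioi s ×ˢ Iic (-u))).toReal := by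
    have hsub : (univ ×ˢ Iic (-u) : Set (ℝ × ℝ)) ⊆ (Ioi s ×ˢ Iic (-u)) ∪ (Iic s ×ˢ univ) := by
      rintro ⟨x, y⟩ ⟨-, hy⟩
      rcases le_or_gt x s with h | h
      · exact Or.inr ⟨h, mem_univ _⟩
      · exact Or.inl ⟨h, hy⟩
    have h : π (univ ×ˢ Iic (-u)) ≤ π (Ioi s ×ˢ Iic (-u)) + π (Iic s ×ˢ univ) :=
      (measure_mono hsub).trans (measure_union_le _ _)
    rw [coupling_snd hc measurableSet_Iic, coupling_fst hc measurableSet_Iic] at h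
    have h2 := ENNReal.toReal_mono
      (by exact ENNReal.add_ne_top.2 ⟨measure_ne_top π _, measure_ne_top μ _⟩) h
    rw [ENNReal.toReal_add (measure_ne_top π _) (measure_ne_top μ _)] at h2
    have e1 : (ν (Iic (-u))).toReal = d := rfl
    have e2 : (μ (Iic s)).toReal = a := rfl
    linarith [h2]
  have k3 : c - b ≤ (π (Iic (-s) ×ˢ Ioi u)).toReal := by
    have hsub : (Iic (-s) ×ˢ univ : Set (ℝ × ℝ)) ⊆ (Iic (-s) ×ˢ Ioi u) ∪ (univ ×ˢ Iic u) := by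
      rintro ⟨x, y⟩ ⟨hx, -⟩
      rcases le_or_gt y u with h | h
      · exact Or.inr ⟨mem_univ _, h⟩
      · exact Or.inl ⟨hx, h⟩
    have h : π (Iic (-s) ×ˢ univ) ≤ π (Iic (-s) ×ˢ Ioi u) + π (univ ×ˢ Iic u) :=
      (measure_mono hsub).trans (measure_union_le _ _)
    rw [coupling_fst hc measurableSet_Iic, coupling_snd hc measurableSet_Iic] at h
    have h2 := ENNReal.toReal_mono
      (by exact ENNReal.add_ne_top.2 ⟨measure_ne_top π _, measure_ne_top ν _⟩) h
    rw [ENNReal.toReal_add (measure_ne_top π _) (measure_ne_top ν _)] at h2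
    have e1 : (μ (Iic (-s))).toReal = c := rfl
    have e2 : (ν (Iic u)).toReal = b := rfl
    linarith [h2]
  rw [hQ1, hQ2, hQ3, hQ4, ENNReal.toReal_ofReal (by linarith [max_le ha1 hb1] : 0 ≤ 1 - max a b),
    ENNReal.toReal_ofReal', ENNReal.toReal_ofReal', ENNReal.toReal_ofReal (le_min hc0 hd0)]
  have g1 : (π (Ioi s ×ˢ Ioi u)).toReal ≤ 1 - max a b := by
    rcases max_cases a b with ⟨h, -⟩ | ⟨h, -⟩ <;> rw [h] <;> assumption
  have g2 : max (d - a) 0 ≤ (π (Ioi s ×ˢ Iic (-u))).toReal :=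
    max_le k2 ENNReal.toReal_nonneg
  have g3 : max (c - b) 0 ≤ (π (Iic (-s) ×ˢ Ioi u)).toReal :=
    max_le k3 ENNReal.toReal_nonneg
  have g4 : (π (Iic (-s) ×ˢ Iic (-u))).toReal ≤ min c d := le_min k4c k4d
  linarith


/-! ### Fubini machinery -/

/-- The product of Lebesgue measure restricted to `(0,∞)` with itself. -/
noncomputable def σv : Measure (ℝ × ℝ) :=
  (volume.restrict (Ioi (0:ℝ))).prod (volume.restrict (Ioi (0:ℝ)))

instance : SFinite σv :=
  inferInstanceAs (SFinite ((volume.restrict (Ioi (0:ℝ))).prod (volume.restrict (Ioi (0:ℝ)))))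

lemma integrable_sq_fst (hc : IsCoupling π μ ν) (hμ2 : Integrable (fun y => y ^ 2) μ) :
    Integrable (fun p : ℝ × ℝ => p.1 ^ 2) π := by
  have h : Integrable (fun y => y ^ 2) (π.map Prod.fst) := by rw [hc.1]; exact hμ2
  exact (integrable_map_measure ((measurable_id.pow_const 2).aestronglyMeasurable)
    measurable_fst.aemeasurable).1 h

lemma integrable_sq_snd (hc : IsCoupling π μ ν) (hν2 : Integrable (fun y => y ^ 2) ν) :
    Integrable (fun p : ℝ × ℝ => p.2 ^ 2) π := by
  have h : Integrable (fun y => y ^ 2) (π.map Prod.snd) := by rw [hc.2]; exact hν2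
  exact (integrable_map_measure ((measurable_id.pow_const 2).aestronglyMeasurable)
    measurable_snd.aemeasurable).1 h

lemma integrable_mul (hc : IsCoupling π μ ν) (hμ2 : Integrable (fun y => y ^ 2) μ)
    (hν2 : Integrable (fun y => y ^ 2) ν) :
    Integrable (fun p : ℝ × ℝ => p.1 * p.2) π := by
  refine ((integrable_sq_fst μ hc hμ2).add (integrable_sq_snd μ hc hν2)).mono
    ((measurable_fst.mul measurable_snd).aestronglyMeasurable) (ae_of_all _ fun p => ?_)
  simp only [Pi.add_apply, Real.norm_eq_abs, abs_mul]
  rw [abs_of_nonneg (by positivity : (0:ℝ) ≤ p.1 ^ 2 + p.2 ^ 2)]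
  nlinarith [sq_nonneg (|p.1| - |p.2|), sq_abs p.1, sq_abs p.2, abs_nonneg p.1, abs_nonneg p.2]

lemma integrable_absmul (hc : IsCoupling π μ ν) (hμ2 : Integrable (fun y => y ^ 2) μ)
    (hν2 : Integrable (fun y => y ^ 2) ν) :
    Integrable (fun p : ℝ × ℝ => |p.1| * |p.2|) π := by
  refine ((integrable_sq_fst μ hc hμ2).add (integrable_sq_snd μ hc hν2)).mono
    (((measurable_fst.abs).mul (measurable_snd.abs)).aestronglyMeasurable)
    (ae_of_all _ fun p => ?_)
  simp only [Pi.add_apply, Real.norm_eq_abs, abs_mul, abs_abs]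
  rw [abs_of_nonneg (by positivity : (0:ℝ) ≤ p.1 ^ 2 + p.2 ^ 2)]
  nlinarith [sq_nonneg (|p.1| - |p.2|), sq_abs p.1, sq_abs p.2, abs_nonneg p.1, abs_nonneg p.2]

lemma integrable_uncurry_e (hc : IsCoupling π μ ν) (hμ2 : Integrable (fun y => y ^ 2) μ)
    (hν2 : Integrable (fun y => y ^ 2) ν) :
    Integrable (Function.uncurry fun (p z : ℝ × ℝ) => e z.1 p.1 * e z.2 p.2) (π.prod σv) := by
  haveI := isProb_of_coupling hc
  have hm : AEStronglyMeasurable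
      (Function.uncurry fun (p z : ℝ × ℝ) => e z.1 p.1 * e z.2 p.2) (π.prod σv) := by
    have : (Function.uncurry fun (p z : ℝ × ℝ) => e z.1 p.1 * e z.2 p.2)
        = fun q : (ℝ × ℝ) × (ℝ × ℝ) => e q.2.1 q.1.1 * e q.2.2 q.1.2 := rfl
    rw [this]
    exact ((measurable_e.comp ((measurable_snd.fst).prodMk (measurable_fst.fst))).mul
      (measurable_e.comp ((measurable_snd.snd).prodMk (measurable_fst.snd)))).aestronglyMeasurable
  rw [integrable_prod_iff hm]
  constructor
  · exact ae_of_all _ fun p => (integrable_e p.1).mul_prod (integrable_e p.2)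
  · have heq : (fun p : ℝ × ℝ =>
        ∫ z, ‖Function.uncurry (fun (p z : ℝ × ℝ) => e z.1 p.1 * e z.2 p.2) (p, z)‖ ∂σv)
        = fun p : ℝ × ℝ => |p.1| * |p.2| := by
      funext p
      have : (fun z : ℝ × ℝ =>
          ‖Function.uncurry (fun (p z : ℝ × ℝ) => e z.1 p.1 * e z.2 p.2) (p, z)‖)
          = fun z : ℝ × ℝ => |e z.1 p.1| * |e z.2 p.2| := by
        funext z
        rw [Function.uncurry, Real.norm_eq_abs, abs_mul]
      rw [this, σv, integral_prod_mul (fun s => |e s p.1|) (fun u => |e u p.2|),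
        integral_abs_e, integral_abs_e]
    rw [heq]
    exact integrable_absmul μ hc hμ2 hν2

lemma integral_mul_repr (hc : IsCoupling π μ ν) (hμ2 : Integrable (fun y => y ^ 2) μ)
    (hν2 : Integrable (fun y => y ^ 2) ν) :
    ∫ p : ℝ × ℝ, p.1 * p.2 ∂π = ∫ z : ℝ × ℝ, (∫ p : ℝ × ℝ, e z.1 p.1 * e z.2 p.2 ∂π) ∂σv := by
  haveI := isProb_of_coupling hc
  have h := integral_integral_swap (f := fun (p z : ℝ × ℝ) => e z.1 p.1 * e z.2 p.2)
    (integrable_uncurry_e μ hc hμ2 hν2)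
  rw [← h]
  refine integral_congr_ae (ae_of_all _ fun p => ?_)
  show p.1 * p.2 = ∫ z : ℝ × ℝ, e z.1 p.1 * e z.2 p.2 ∂σv
  rw [σv, integral_prod_mul (fun s => e s p.1) (fun u => e u p.2), integral_e, integral_e]

lemma integrable_J (hc : IsCoupling π μ ν) (hμ2 : Integrable (fun y => y ^ 2) μ)
    (hν2 : Integrable (fun y => y ^ 2) ν) :
    Integrable (fun z : ℝ × ℝ => ∫ p : ℝ × ℝ, e z.1 p.1 * e z.2 p.2 ∂π) σv := by
  haveI := isProb_of_coupling hc
  simpa using (integrable_uncurry_e μ hc hμ2 hν2).integral_prod_right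

lemma integral_mul_le (hc : IsCoupling π μ ν) (hμ2 : Integrable (fun y => y ^ 2) μ)
    (hν2 : Integrable (fun y => y ^ 2) ν) :
    ∫ p : ℝ × ℝ, p.1 * p.2 ∂π ≤ ∫ p : ℝ × ℝ, p.1 * p.2
      ∂(Measure.map (fun t => (quantile μ t, quantile ν t)) (volume.restrict (Ioo 0 1))) := by
  rw [integral_mul_repr μ hc hμ2 hν2, integral_mul_repr μ (isCoupling_Q μ ν) hμ2 hν2]
  exact integral_mono (integrable_J μ hc hμ2 hν2) (integrable_J μ (isCoupling_Q μ ν) hμ2 hν2)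
    (fun z => J_le μ hc z.1 z.2)

lemma cost_expand (hc : IsCoupling π μ ν) (hμ2 : Integrable (fun y => y ^ 2) μ)
    (hν2 : Integrable (fun y => y ^ 2) ν) :
    ∫ p : ℝ × ℝ, (p.1 - p.2) ^ 2 ∂π
      = (∫ y, y ^ 2 ∂μ) + (∫ y, y ^ 2 ∂ν) - 2 * ∫ p : ℝ × ℝ, p.1 * p.2 ∂π := by
  haveI := isProb_of_coupling hc
  have h1 := integrable_sq_fst μ hc hμ2
  have h2 := integrable_sq_snd μ hc hν2
  have h12 := integrable_mul μ hc hμ2 hν2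
  have key : (fun p : ℝ × ℝ => (p.1 - p.2) ^ 2)
      = fun p : ℝ × ℝ => p.1 ^ 2 + p.2 ^ 2 - 2 * (p.1 * p.2) := by
    funext p; ring
  have e1 : ∫ p : ℝ × ℝ, p.1 ^ 2 ∂π = ∫ y, y ^ 2 ∂μ := by
    rw [← hc.1, integral_map measurable_fst.aemeasurable
      ((continuous_pow 2).measurable.aestronglyMeasurable)]
  have e2 : ∫ p : ℝ × ℝ, p.2 ^ 2 ∂π = ∫ y, y ^ 2 ∂ν := by
    rw [← hc.2, integral_map measurable_snd.aemeasurable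
      ((continuous_pow 2).measurable.aestronglyMeasurable)]
  have iadd : Integrable (fun p : ℝ × ℝ => p.1 ^ 2 + p.2 ^ 2) π := by
    exact h1.add h2
  rw [key, integral_sub iadd (h12.const_mul 2), integral_add h1 h2,
    MeasureTheory.integral_const_mul, e1, e2]

end W2aux

open W2aux

theorem w2sq_eq_integral_quantile (μ ν : Measure ℝ)
    [IsProbabilityMeasure μ] [IsProbabilityMeasure ν]
    (hμ2 : Integrable (fun y => y ^ 2) μ) (hν2 : Integrable (fun y => y ^ 2) ν) :
    W2sq μ ν = ∫ t in Set.Ioo (0 : ℝ) 1, |quantile μ t - quantile ν t| ^ 2 := by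
  have hφ : Measurable (fun t => (quantile μ t, quantile ν t)) := measurable_pairQ μ ν
  have hcQ : IsCoupling (Measure.map (fun t => (quantile μ t, quantile ν t))
      (volume.restrict (Ioo 0 1))) μ ν := isCoupling_Q μ ν
  have hIQ : ∫ p : ℝ × ℝ, (p.1 - p.2) ^ 2
      ∂(Measure.map (fun t => (quantile μ t, quantile ν t)) (volume.restrict (Ioo 0 1)))
      = ∫ t in Set.Ioo (0 : ℝ) 1, |quantile μ t - quantile ν t| ^ 2 := by
    rw [integral_map (f := fun p : ℝ × ℝ => (p.1 - p.2) ^ 2) hφ.aemeasurable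
      (((measurable_fst.sub measurable_snd).pow_const 2).aestronglyMeasurable)]
    simp only [sq_abs]
  set S := {r | ∃ π : Measure (ℝ × ℝ), IsCoupling π μ ν ∧ r = ∫ p, (p.1 - p.2) ^ 2 ∂π} with hS
  have hmem : (∫ p : ℝ × ℝ, (p.1 - p.2) ^ 2
      ∂(Measure.map (fun t => (quantile μ t, quantile ν t)) (volume.restrict (Ioo 0 1)))) ∈ S :=
    ⟨_, hcQ, rfl⟩
  have hlb0 : ∀ r ∈ S, (0:ℝ) ≤ r := by
    rintro r ⟨π, -, rfl⟩
    exact integral_nonneg fun p => sq_nonneg _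
  have hge : ∀ r ∈ S, (∫ p : ℝ × ℝ, (p.1 - p.2) ^ 2
      ∂(Measure.map (fun t => (quantile μ t, quantile ν t)) (volume.restrict (Ioo 0 1)))) ≤ r := by
    rintro r ⟨π, hcπ, rfl⟩
    rw [cost_expand μ hcπ hμ2 hν2, cost_expand μ hcQ hμ2 hν2]
    have := integral_mul_le μ hcπ hμ2 hν2
    linarith
  rw [W2sq, ← hS, ← hIQ]
  exact le_antisymm (csInf_le ⟨0, hlb0⟩ hmem) (le_csInf ⟨_, hmem⟩ hge)
end

section
/- If X and Y are random variables taking values in standard Borel spaces 𝒳 and 𝒴, then there exists a random variable U uniformly distributed on (0,1), independent of X, and a Borel measurable function T : 𝒳 × (0,1) → 𝒴 such that (X, Y) = (X, T(X, U)) almost surely. -/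
open MeasureTheory Set

/-- The uniform probability measure on `(0,1)`. -/
noncomputable def unif : Measure ℝ := volume.restrict (Set.Ioo (0 : ℝ) 1)

instance : IsProbabilityMeasure unif := by
  constructor
  rw [unif, Measure.restrict_apply_univ, Real.volume_Ioo]
  norm_num

/-- Key property of the quantile function of a Stieltjes function with limits 0 and 1. -/
lemma quantile_le_iff (F : StieltjesFunction ℝ) (h0 : Filter.Tendsto F Filter.atBot (nhds 0))
    (h1 : Filter.Tendsto F Filter.atTop (nhds 1)) {u t : ℝ} (hu0 : 0 < u) (hu1 : u < 1) :
    sInf {r | u ≤ F r} ≤ t ↔ u ≤ F t := by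
  have hbdd : BddBelow {r | u ≤ F r} := by
    obtain ⟨y, hy⟩ := Filter.eventually_atBot.mp (h0.eventually_lt_const hu0)
    refine ⟨y, fun z hz => ?_⟩
    by_contra h
    exact absurd hz (not_le.mpr (hy z (le_of_not_ge h)))
  have hne : {r | u ≤ F r}.Nonempty := by
    obtain ⟨z, hz⟩ := (h1.eventually_const_lt hu1).exists
    exact ⟨z, hz.le⟩
  constructor
  · intro h
    have hle : ∀ s ∈ Ioi t, u ≤ F s := by
      intro s hs
      obtain ⟨z, hzS, hzlt⟩ := exists_lt_of_csInf_lt hne (lt_of_le_of_lt h hs)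
      exact hzS.trans (F.mono hzlt.le)
    have htend : Filter.Tendsto F (nhdsWithin t (Ioi t)) (nhds (F t)) :=
      (F.right_continuous t).tendsto.mono_left (nhdsWithin_mono _ Ioi_subset_Ici_self)
    exact ge_of_tendsto htend (eventually_nhdsWithin_of_forall hle)
  · intro h
    exact csInf_le hbdd h

lemma volume_Iic_inter_Ioo {c : ℝ} (h0 : 0 ≤ c) (h1 : c ≤ 1) :
    volume (Iic c ∩ Ioo 0 1) = ENNReal.ofReal c := by
  rcases lt_or_ge c 1 with h | h
  · have hset : Iic c ∩ Ioo 0 1 = Ioc 0 c := by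
      ext u
      simp only [mem_inter_iff, mem_Iic, mem_Ioo, mem_Ioc]
      constructor
      · rintro ⟨h1, h2, h3⟩; exact ⟨h2, h1⟩
      · rintro ⟨h2, h3⟩; exact ⟨h3, h2, lt_of_le_of_lt h3 h⟩
    rw [hset, Real.volume_Ioc, sub_zero]
  · have hc : c = 1 := le_antisymm h1 h
    subst hc
    have hset : Iic (1 : ℝ) ∩ Ioo 0 1 = Ioo 0 1 := by
      rw [inter_eq_right]
      exact fun u hu => hu.2.le
    rw [hset, Real.volume_Ioo]
    norm_num

/-- Noise outsourcing lemma: on a (possibly extended) probability space there exist copies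
`X', Y'` of `X, Y`, a uniform random variable `U` independent of `X'`, and a Borel map `T`
with `Y' = T (X', U)` almost surely. -/
theorem noise_outsourcing {Ω 𝓧 𝓨 : Type*} [MeasurableSpace Ω]
    [MeasurableSpace 𝓧] [StandardBorelSpace 𝓧] [MeasurableSpace 𝓨] [StandardBorelSpace 𝓨]
    (P : Measure Ω) [IsProbabilityMeasure P]
    (X : Ω → 𝓧) (Y : Ω → 𝓨) (hX : Measurable X) (hY : Measurable Y) :
    ∃ (Ω' : Type) (_ : MeasurableSpace Ω') (P' : Measure Ω')
      (X' : Ω' → 𝓧) (Y' : Ω' → 𝓨) (U : Ω' → ℝ) (T : 𝓧 × ℝ → 𝓨),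
      IsProbabilityMeasure P' ∧ Measurable X' ∧ Measurable Y' ∧ Measurable U ∧
      Measurable T ∧
      P'.map (fun ω => (X' ω, Y' ω)) = P.map (fun ω => (X ω, Y ω)) ∧
      P'.map U = unif ∧
      ProbabilityTheory.IndepFun X' U P' ∧
      (∀ᵐ ω ∂P', Y' ω = T (X' ω, U ω)) := by
  classical
  -- nonemptiness
  have hΩ : Nonempty Ω := by
    by_contra h
    rw [not_nonempty_iff] at h
    have h1 : P univ = 1 := measure_univ
    rw [Set.univ_eq_empty_iff.mpr h, measure_empty] at h1
    exact zero_ne_one h1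
  have h𝓨 : Nonempty 𝓨 := ⟨Y hΩ.some⟩
  have h𝓧 : Nonempty 𝓧 := ⟨X hΩ.some⟩
  -- measurable embeddings into ℝ and retractions
  obtain ⟨e, he⟩ := exists_measurableEmbedding_real 𝓨
  obtain ⟨r, hr, hre⟩ := he.exists_measurable_extend measurable_id (fun _ => h𝓨)
  obtain ⟨eX, heX⟩ := exists_measurableEmbedding_real 𝓧
  obtain ⟨rX, hrX, hrXe⟩ := heX.exists_measurable_extend measurable_id (fun _ => h𝓧)
  -- joint law of (X, e ∘ Y)
  set Z : Ω → ℝ := fun ω => e (Y ω) with hZdef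
  have hZ : Measurable Z := he.measurable.comp hY
  set ρ : Measure (𝓧 × ℝ) := P.map (fun ω => (X ω, Z ω)) with hρdef
  have hρ : IsProbabilityMeasure ρ := Measure.isProbabilityMeasure_map (hX.prodMk hZ).aemeasurable
  set μ : Measure 𝓧 := P.map X with hμdef
  have hμ : IsProbabilityMeasure μ := Measure.isProbabilityMeasure_map hX.aemeasurable
  have hfst : ρ.fst = μ := Measure.fst_map_prodMk hZ
  set κ := ρ.condKernel with hκdef
  -- the quantile map
  set F : 𝓧 → StieltjesFunction ℝ := fun x => ProbabilityTheory.cdf (κ x) with hFdef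
  have hFt : ∀ t : ℝ, Measurable fun x => F x t := by
    intro t
    have heq : (fun x => F x t) = fun x => (κ x (Iic t)).toReal := by
      funext x
      exact (ProbabilityTheory.cdf_eq_real _ t).trans (measureReal_def _ _)
    rw [heq]
    exact (ProbabilityTheory.Kernel.measurable_coe κ measurableSet_Iic).ennreal_toReal
  set g : 𝓧 × ℝ → ℝ :=
    fun p => if p.2 ∈ Ioo (0 : ℝ) 1 then sInf {r | p.2 ≤ F p.1 r} else 0 with hgdef
  have hkey : ∀ (x : 𝓧) (u : ℝ), u ∈ Ioo (0 : ℝ) 1 → ∀ t : ℝ,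
      (sInf {r | u ≤ F x r} ≤ t ↔ u ≤ F x t) := fun x u hu t =>
    quantile_le_iff (F x) (ProbabilityTheory.tendsto_cdf_atBot _)
      (ProbabilityTheory.tendsto_cdf_atTop _) hu.1 hu.2
  have hA : MeasurableSet {p : 𝓧 × ℝ | p.2 ∈ Ioo (0 : ℝ) 1} :=
    measurable_snd measurableSet_Ioo
  have hg : Measurable g := by
    apply measurable_of_Iic
    intro t
    have hset : g ⁻¹' Iic t =
        ({p : 𝓧 × ℝ | p.2 ∈ Ioo (0 : ℝ) 1} ∩ {p : 𝓧 × ℝ | p.2 ≤ F p.1 t}) ∪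
        ({p : 𝓧 × ℝ | p.2 ∈ Ioo (0 : ℝ) 1}ᶜ ∩ {p : 𝓧 × ℝ | (0 : ℝ) ≤ t}) := by
      ext p
      simp only [mem_preimage, mem_Iic, mem_union, mem_inter_iff, mem_setOf_eq, mem_compl_iff,
        hgdef]
      by_cases hp : p.2 ∈ Ioo (0 : ℝ) 1
      · simp only [hp, if_true, not_true, false_and, or_false, true_and]
        exact hkey p.1 p.2 hp t
      · simp [hp]
    rw [hset]
    refine (hA.inter ?_).union (hA.compl.inter ?_)
    · exact measurableSet_le measurable_snd ((hFt t).comp measurable_fst)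
    · exact MeasurableSet.const _
  -- for each x, the quantile map pushes unif to κ x
  have hmap : ∀ x : 𝓧, unif.map (fun u => g (x, u)) = κ x := by
    intro x
    have hgx : Measurable fun u => g (x, u) := hg.comp measurable_prodMk_left
    have : IsProbabilityMeasure (unif.map fun u => g (x, u)) :=
      Measure.isProbabilityMeasure_map hgx.aemeasurable
    refine Measure.ext_of_Iic _ _ fun t => ?_
    rw [Measure.map_apply hgx measurableSet_Iic]
    have hpre : (fun u => g (x, u)) ⁻¹' Iic t ∩ Ioo 0 1 = Iic (F x t) ∩ Ioo 0 1 := by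
      ext u
      simp only [mem_inter_iff, mem_preimage, mem_Iic, mem_Ioo]
      constructor
      · rintro ⟨h1, h2⟩
        refine ⟨?_, h2⟩
        have : g (x, u) = sInf {r | u ≤ F x r} := by
          simp only [hgdef, mem_Ioo]
          rw [if_pos h2]
        rw [this] at h1
        exact (hkey x u h2 t).mp h1
      · rintro ⟨h1, h2⟩
        refine ⟨?_, h2⟩
        have : g (x, u) = sInf {r | u ≤ F x r} := by
          simp only [hgdef, mem_Ioo]
          rw [if_pos h2]
        rw [this]
        exact (hkey x u h2 t).mpr h1
    rw [unif, Measure.restrict_apply (hgx measurableSet_Iic), hpre,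
      ← ProbabilityTheory.ofReal_cdf (κ x) t]
    exact volume_Iic_inter_Ioo (ProbabilityTheory.cdf_nonneg _ _)
      (ProbabilityTheory.cdf_le_one _ _)
  -- the joint law identity on 𝓧 × ℝ
  have hgraph : Measurable fun q : 𝓧 × ℝ => (q.1, g q) := measurable_fst.prodMk hg
  have hjoint : (μ.prod unif).map (fun q : 𝓧 × ℝ => (q.1, g q)) = ρ := by
    conv_rhs => rw [← ρ.disintegrate ρ.condKernel]
    ext s hs
    rw [Measure.map_apply hgraph hs, Measure.compProd_apply hs, hfst,
      Measure.prod_apply (hgraph hs)]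
    congr 1
    funext x
    have hpre : Prod.mk x ⁻¹' ((fun q : 𝓧 × ℝ => (q.1, g q)) ⁻¹' s) =
        (fun u => g (x, u)) ⁻¹' (Prod.mk x ⁻¹' s) := rfl
    have hgx : Measurable fun u => g (x, u) := hg.comp measurable_prodMk_left
    rw [hpre, ← Measure.map_apply hgx (measurable_prodMk_left hs), hmap x]
  -- set up the final space
  set μ' : Measure ℝ := P.map (fun ω => eX (X ω)) with hμ'def
  have hμ' : IsProbabilityMeasure μ' := Measure.isProbabilityMeasure_map
    (heX.measurable.comp hX).aemeasurable
  have hμ'r : μ'.map rX = μ := by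
    rw [hμ'def, show (fun ω => eX (X ω)) = eX ∘ X from rfl,
      Measure.map_map hrX (heX.measurable.comp hX), hμdef]
    congr 1
    funext ω
    exact congrFun hrXe (X ω)
  refine ⟨ℝ × ℝ, inferInstance, μ'.prod unif, fun p => rX p.1, fun p => r (g (rX p.1, p.2)),
    Prod.snd, fun q => r (g q), inferInstance, hrX.comp measurable_fst,
    hr.comp (hg.comp ((hrX.comp measurable_fst).prodMk measurable_snd)),
    measurable_snd, hr.comp hg, ?_, ?_, ?_, ?_⟩
  · -- joint law of (X', Y')
    have hφ : Measurable fun p : ℝ × ℝ => (rX p.1, p.2) :=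
      (hrX.comp measurable_fst).prodMk measurable_snd
    have hψ : Measurable fun q : 𝓧 × ℝ => (q.1, r (g q)) :=
      measurable_fst.prodMk (hr.comp hg)
    have hρr : Measurable fun z : 𝓧 × ℝ => (z.1, r z.2) :=
      measurable_fst.prodMk (hr.comp measurable_snd)
    have hφmap : (μ'.prod unif).map (fun p : ℝ × ℝ => (rX p.1, p.2)) = μ.prod unif := by
      have h1 : (fun p : ℝ × ℝ => (rX p.1, p.2)) = Prod.map rX id := rfl
      rw [h1, ← Measure.map_prod_map _ _ hrX measurable_id, hμ'r, Measure.map_id]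
    have main : (μ'.prod unif).map (fun p : ℝ × ℝ => (rX p.1, r (g (rX p.1, p.2)))) =
        P.map (fun ω => (X ω, Y ω)) := calc
      (μ'.prod unif).map (fun p : ℝ × ℝ => (rX p.1, r (g (rX p.1, p.2))))
          = ((μ'.prod unif).map (fun p : ℝ × ℝ => (rX p.1, p.2))).map
              (fun q : 𝓧 × ℝ => (q.1, r (g q))) := by
            rw [Measure.map_map hψ hφ]; rfl
      _ = (μ.prod unif).map (fun q : 𝓧 × ℝ => (q.1, r (g q))) := by rw [hφmap]
      _ = ((μ.prod unif).map (fun q : 𝓧 × ℝ => (q.1, g q))).map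
              (fun z : 𝓧 × ℝ => (z.1, r z.2)) := by
            rw [Measure.map_map hρr hgraph]
            rfl
      _ = ρ.map (fun z : 𝓧 × ℝ => (z.1, r z.2)) := by rw [hjoint]
      _ = P.map (fun ω => (X ω, r (Z ω))) := by
            rw [hρdef, Measure.map_map hρr (hX.prodMk hZ)]
            rfl
      _ = P.map (fun ω => (X ω, Y ω)) := by
            congr 1
            funext ω
            simp only [hZdef]
            rw [show r (e (Y ω)) = Y ω from congrFun hre (Y ω)]
    exact main
  · -- law of U
    rw [Measure.map_snd_prod, measure_univ, one_smul]
  · -- independence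
    have h0 : ProbabilityTheory.IndepFun (Prod.fst : ℝ × ℝ → ℝ) (Prod.snd : ℝ × ℝ → ℝ)
        (μ'.prod unif) := by
      rw [ProbabilityTheory.indepFun_iff_map_prod_eq_prod_map_map
        measurable_fst.aemeasurable measurable_snd.aemeasurable]
      have h1 : (fun ω : ℝ × ℝ => (ω.1, ω.2)) = id := rfl
      rw [h1, Measure.map_id, Measure.map_fst_prod, Measure.map_snd_prod,
        measure_univ, measure_univ, one_smul, one_smul]
    have := h0.comp hrX measurable_id
    exact this
  · -- a.e. equality (in fact everywhere)
    filter_upwards with p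
    rfl
end

section
/- Let T : (0,1) → ℝ be a nondecreasing measurable function and let μ = T_# 𝕌 be the pushforward of the uniform distribution on (0,1). Then T(t) = F_μ⁻¹(t) for almost every t ∈ (0,1), where F_μ⁻¹ is the quantile function of μ. -/
open MeasureTheory Set

instance inst_s13 : IsProbabilityMeasure unif :=
  ⟨by simp [unif, Measure.restrict_apply MeasurableSet.univ, Real.volume_Ioo]⟩

/-- A nondecreasing map pushing forward the uniform distribution on `(0,1)` to `μ`
coincides a.e. with the quantile function of `μ`. -/
theorem monotone_pushforward_eq_quantile (T : ℝ → ℝ) (hmono : Monotone T)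
    (hT : Measurable T) :
    ∀ᵐ t ∂unif, T t = quantile (unif.map T) t := by
  set μ := unif.map T with hμ
  have : IsProbabilityMeasure μ := Measure.isProbabilityMeasure_map hT.aemeasurable
  have hμapp : ∀ y, μ (Iic y) = volume (T ⁻¹' (Iic y) ∩ Ioo 0 1) := by
    intro y
    rw [hμ, Measure.map_apply hT measurableSet_Iic, unif,
      Measure.restrict_apply (hT measurableSet_Iic)]
  have h1 : ∀ᵐ t ∂unif, t ∈ Ioo (0:ℝ) 1 := by
    rw [unif]; exact ae_restrict_mem measurableSet_Ioo
  have h2 : ∀ᵐ t ∂unif, ContinuousAt T t := by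
    have hc : unif {t | ¬ ContinuousAt T t} = 0 := by
      refine le_antisymm (le_trans ?_ (hmono.countable_not_continuousAt.measure_zero volume).le)
        zero_le
      exact Measure.restrict_le_self _
    exact hc
  filter_upwards [h1, h2] with t ht hct
  -- key facts
  have hlb : ∀ t'', 0 < t'' → t'' < t → ∀ y ∈ {y | t ≤ mcdf μ y}, T t'' ≤ y := by
    intro t'' h0 hlt y hy
    by_contra h
    push_neg at h
    have hsub : T ⁻¹' (Iic y) ∩ Ioo 0 1 ⊆ Ioo 0 t'' := by
      rintro u ⟨hu1, hu2⟩
      refine ⟨hu2.1, ?_⟩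
      by_contra hc
      push_neg at hc
      exact absurd (hmono hc) (not_le.2 (lt_of_le_of_lt hu1 h))
    have hv : μ (Iic y) ≤ ENNReal.ofReal t'' := by
      rw [hμapp]
      calc volume (T ⁻¹' (Iic y) ∩ Ioo 0 1) ≤ volume (Ioo 0 t'') := measure_mono hsub
        _ = ENNReal.ofReal t'' := by rw [Real.volume_Ioo, sub_zero]
    have : mcdf μ y ≤ t'' := by
      have := ENNReal.toReal_mono (by simp) hv
      simpa [mcdf, ENNReal.toReal_ofReal h0.le] using this
    have hy' : t ≤ mcdf μ y := hy
    linarith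
  have hmem : ∀ t', t < t' → t' < 1 → T t' ∈ {y | t ≤ mcdf μ y} := by
    intro t' hlt h1'
    have hsub : Ioc 0 t' ⊆ T ⁻¹' (Iic (T t')) ∩ Ioo 0 1 := by
      rintro u ⟨hu0, hu1⟩
      exact ⟨hmono hu1, hu0, lt_of_le_of_lt hu1 h1'⟩
    have hv : ENNReal.ofReal t' ≤ μ (Iic (T t')) := by
      rw [hμapp]
      calc ENNReal.ofReal t' = volume (Ioc 0 t') := by rw [Real.volume_Ioc, sub_zero]
        _ ≤ _ := measure_mono hsub
    have hfin : μ (Iic (T t')) ≠ ⊤ := measure_ne_top _ _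
    have : t' ≤ mcdf μ (T t') := by
      have := ENNReal.toReal_mono hfin hv
      simpa [mcdf, ENNReal.toReal_ofReal (le_of_lt (ht.1.trans hlt))] using this
    exact le_trans hlt.le this
  have hBdd : BddBelow {y | t ≤ mcdf μ y} :=
    ⟨T (t/2), fun y hy => hlb (t/2) (half_pos ht.1) (half_lt_self ht.1) y hy⟩
  have hNe : {y | t ≤ mcdf μ y}.Nonempty :=
    ⟨T ((t+1)/2), hmem _ (by linarith [ht.2]) (by linarith [ht.2])⟩
  rw [Metric.continuousAt_iff] at hct
  refine le_antisymm ?_ ?_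
  · -- T t ≤ quantile
    by_contra h
    push_neg at h
    obtain ⟨δ, hδ, hd⟩ := hct (T t - quantile μ t) (by linarith)
    set t'' := max (t - δ/2) (t/2) with ht''
    have h0 : 0 < t'' := lt_max_of_lt_right (half_pos ht.1)
    have hlt : t'' < t := max_lt (by linarith) (half_lt_self ht.1)
    have hdist : dist t'' t < δ := by
      rw [Real.dist_eq, abs_of_nonpos (by linarith)]
      have : t - δ/2 ≤ t'' := le_max_left _ _
      linarith
    have := hd hdist
    rw [Real.dist_eq, abs_lt] at this
    have hle : T t'' ≤ quantile μ t := le_csInf hNe (hlb t'' h0 hlt)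
    linarith [this.1]
  · -- quantile ≤ T t
    by_contra h
    push_neg at h
    obtain ⟨δ, hδ, hd⟩ := hct (quantile μ t - T t) (by linarith)
    set t' := min (t + δ/2) ((t+1)/2) with ht'
    have hlt : t < t' := lt_min (by linarith) (by linarith [ht.2])
    have h1' : t' < 1 := lt_of_le_of_lt (min_le_right _ _) (by linarith [ht.2])
    have hdist : dist t' t < δ := by
      rw [Real.dist_eq, abs_of_nonneg (by linarith)]
      have : t' ≤ t + δ/2 := min_le_left _ _
      linarith
    have := hd hdist
    rw [Real.dist_eq, abs_lt] at this
    have hle : quantile μ t ≤ T t' := csInf_le hBdd (hmem t' hlt h1')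
    linarith [this.2]
end
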